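/- arXiv:1401.5735 — 4 statements merged into one kernel-verified Lean document; each statement's English description precedes it below -/
import Mathlib

section
/- For every graph G on n vertices, the number of triangles plus the number of independent sets of size 3 equals (1/2)·[−C(n,3) + Σ_{v∈V} (C(deg_G(v),2) + C(n−1−deg_G(v),2))], where C denotes the binomial coefficient. -/
open Finset

section GoodmanAux

variable {V : Type*} [Fintype V] [DecidableEq V] (G : SimpleGraph V) [DecidableRel G.Adj]

/-- The counting set: pairs `(v, p)` with `p` a 2-set all-adjacent or all-nonadjacent to `v`. -/
private def goodmanA : Finset (V × Finset V) :=
  ((univ : Finset V) ×ˢ (univ : Finset V).powersetCard 2).filter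
    fun x => x.2 ⊆ G.neighborFinset x.1 ∨ x.2 ⊆ Gᶜ.neighborFinset x.1

private lemma goodmanA_card_left :
    (goodmanA G).card = ∑ v : V, ((G.degree v).choose 2 + (Gᶜ.degree v).choose 2) := by
  rw [Finset.card_eq_sum_card_fiberwise (f := Prod.fst) (t := univ) (fun x _ => mem_univ _)]
  refine Finset.sum_congr rfl fun v _ => ?_
  have h : (goodmanA G).filter (fun x => x.1 = v) =
      ((G.neighborFinset v).powersetCard 2 ∪ (Gᶜ.neighborFinset v).powersetCard 2).image
        (fun p => (v, p)) := by
    ext ⟨w, p⟩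
    simp only [goodmanA, mem_filter, mem_product, mem_univ, true_and, mem_image, mem_union,
      mem_powersetCard, Prod.mk.injEq]
    constructor
    · rintro ⟨⟨hc, hsub⟩, rfl⟩
      exact ⟨p, by tauto, rfl, rfl⟩
    · rintro ⟨q, hq, rfl, rfl⟩
      rcases hq with ⟨hs, hc⟩ | ⟨hs, hc⟩
      · exact ⟨⟨⟨subset_univ _, hc⟩, Or.inl hs⟩, rfl⟩
      · exact ⟨⟨⟨subset_univ _, hc⟩, Or.inr hs⟩, rfl⟩
  rw [h, Finset.card_image_of_injective _ (fun a b h => by simpa using h),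
    Finset.card_union_of_disjoint, card_powersetCard, card_powersetCard,
    SimpleGraph.card_neighborFinset_eq_degree, SimpleGraph.card_neighborFinset_eq_degree]
  · rw [Finset.disjoint_left]
    rintro p hp hp'
    rw [mem_powersetCard] at hp hp'
    obtain ⟨a, ha⟩ := Finset.card_pos.mp (by rw [hp.2]; norm_num)
    have h1 := hp.1 ha
    have h2 := hp'.1 ha
    rw [SimpleGraph.mem_neighborFinset] at h1 h2
    exact h2.2 h1

private lemma goodmanA_not_mem_snd {x : V × Finset V} (hx : x ∈ goodmanA G) : x.1 ∉ x.2 := by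
  simp only [goodmanA, mem_filter] at hx
  rcases hx.2 with h | h <;> intro hm <;> have := h hm <;>
    simp [SimpleGraph.mem_neighborFinset] at this

private lemma goodmanA_card_right :
    (goodmanA G).card = ∑ T ∈ (univ : Finset V).powersetCard 3,
      (T.filter fun v =>
        T.erase v ⊆ G.neighborFinset v ∨ T.erase v ⊆ Gᶜ.neighborFinset v).card := by
  rw [Finset.card_eq_sum_card_fiberwise (f := fun x => insert x.1 x.2)
    (t := (univ : Finset V).powersetCard 3) ?_]
  · refine Finset.sum_congr rfl fun T hT => ?_
    rw [mem_powersetCard] at hT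
    have heq : (goodmanA G).filter (fun x => insert x.1 x.2 = T) =
        (T.filter fun v =>
            T.erase v ⊆ G.neighborFinset v ∨ T.erase v ⊆ Gᶜ.neighborFinset v).image
          (fun v => (v, T.erase v)) := by
      ext ⟨w, p⟩
      simp only [goodmanA, mem_filter, mem_product, mem_univ, true_and, mem_image,
        mem_powersetCard, Prod.mk.injEq]
      constructor
      · rintro ⟨⟨⟨-, hc⟩, hcond⟩, hins⟩
        have hw : w ∉ p := by
          rcases hcond with h | h <;> intro hm <;> have := h hm <;>
            simp [SimpleGraph.mem_neighborFinset] at this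
        have hpe : T.erase w = p := by rw [← hins, Finset.erase_insert hw]
        have hwT : w ∈ T := by rw [← hins]; exact mem_insert_self _ _
        exact ⟨w, ⟨hwT, by rw [hpe]; exact hcond⟩, rfl, hpe⟩
      · rintro ⟨v, ⟨hvT, hcond⟩, rfl, rfl⟩
        refine ⟨⟨⟨subset_univ _, ?_⟩, hcond⟩, Finset.insert_erase hvT⟩
        rw [Finset.card_erase_of_mem hvT, hT.2]
    rw [heq, Finset.card_image_of_injective _ fun a b h => congrArg Prod.fst h]
  · intro x hx
    have h1 := goodmanA_not_mem_snd G hx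
    simp only [goodmanA, mem_coe, mem_filter, mem_product, mem_powersetCard] at hx
    rw [mem_coe, mem_powersetCard]
    exact ⟨subset_univ _, by rw [Finset.card_insert_of_notMem h1, hx.1.2.2]⟩

private lemma card_filter_triple {a b c : V} (hab : a ≠ b) (hac : a ≠ c) (hbc : b ≠ c)
    (P : V → Prop) [DecidablePred P] :
    (({a, b, c} : Finset V).filter P).card =
      (if P a then 1 else 0) + (if P b then 1 else 0) + (if P c then 1 else 0) := by
  rw [filter_insert, filter_insert, filter_singleton]
  split_ifs <;>
    simp [Finset.card_insert_of_notMem, hab, hac, hbc, Finset.mem_filter]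

private lemma goodman_fiber_card {T : Finset V} (hT : T ∈ (univ : Finset V).powersetCard 3) :
    (T.filter fun v =>
        T.erase v ⊆ G.neighborFinset v ∨ T.erase v ⊆ Gᶜ.neighborFinset v).card =
      if T ∈ G.cliqueFinset 3 ∪ Gᶜ.cliqueFinset 3 then 3 else 1 := by
  rw [mem_powersetCard] at hT
  obtain ⟨a, b, c, hab, hac, hbc, rfl⟩ := Finset.card_eq_three.mp hT.2
  have hTa : ({a, b, c} : Finset V).erase a = {b, c} := by
    ext x; simp only [mem_erase, mem_insert, mem_singleton]
    constructor
    · rintro ⟨h, rfl | rfl | rfl⟩ <;> tauto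
    · rintro (rfl | rfl) <;> simp [hab.symm, hac.symm]
  have hTb : ({a, b, c} : Finset V).erase b = {a, c} := by
    ext x; simp only [mem_erase, mem_insert, mem_singleton]
    constructor
    · rintro ⟨h, rfl | rfl | rfl⟩ <;> tauto
    · rintro (rfl | rfl) <;> simp [hab, hbc.symm]
  have hTc : ({a, b, c} : Finset V).erase c = {a, b} := by
    ext x; simp only [mem_erase, mem_insert, mem_singleton]
    constructor
    · rintro ⟨h, rfl | rfl | rfl⟩ <;> tauto
    · rintro (rfl | rfl) <;> simp [hac, hbc]
  rw [card_filter_triple hab hac hbc]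
  simp only [hTa, hTb, hTc, Finset.insert_subset_iff, Finset.singleton_subset_iff,
    SimpleGraph.mem_neighborFinset, SimpleGraph.compl_adj, Finset.mem_union,
    SimpleGraph.mem_cliqueFinset_iff, SimpleGraph.is3Clique_triple_iff]
  have h1 : G.Adj b a ↔ G.Adj a b := G.adj_comm b a
  have h2 : G.Adj c a ↔ G.Adj a c := G.adj_comm c a
  have h3 : G.Adj c b ↔ G.Adj b c := G.adj_comm c b
  have h4 : Gᶜ.Adj a b ↔ ¬ G.Adj a b := by simp [SimpleGraph.compl_adj, hab]
  have h5 : Gᶜ.Adj a c ↔ ¬ G.Adj a c := by simp [SimpleGraph.compl_adj, hac]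
  have h6 : Gᶜ.Adj b c ↔ ¬ G.Adj b c := by simp [SimpleGraph.compl_adj, hbc]
  by_cases p : G.Adj a b <;> by_cases q : G.Adj a c <;> by_cases r : G.Adj b c <;>
    simp [p, q, r, h1, h2, h3, h4, h5, h6, hab, hac, hbc, hab.symm, hac.symm, hbc.symm]

private lemma goodman_nat :
    ∑ v : V, ((G.degree v).choose 2 + (Gᶜ.degree v).choose 2) =
      2 * ((G.cliqueFinset 3).card + (Gᶜ.cliqueFinset 3).card) + (Fintype.card V).choose 3 := by
  classical
  set S : Finset (Finset V) := G.cliqueFinset 3 ∪ Gᶜ.cliqueFinset 3 with hS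
  set P3 : Finset (Finset V) := (univ : Finset V).powersetCard 3 with hP3
  have hS_sub : S ⊆ P3 := by
    intro T hT
    rw [hP3, mem_powersetCard]
    refine ⟨subset_univ _, ?_⟩
    rcases mem_union.mp hT with h | h <;>
      exact (SimpleGraph.mem_cliqueFinset_iff.mp h).card_eq
  have hdisj : Disjoint (G.cliqueFinset 3) (Gᶜ.cliqueFinset 3) := by
    rw [Finset.disjoint_left]
    intro T h1 h2
    have h1' := SimpleGraph.mem_cliqueFinset_iff.mp h1
    obtain ⟨a, b, c, hab, hac, hbc, rfl⟩ := Finset.card_eq_three.mp h1'.card_eq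
    have hA := (SimpleGraph.is3Clique_triple_iff.mp h1').1
    have hB := (SimpleGraph.is3Clique_triple_iff.mp
      (SimpleGraph.mem_cliqueFinset_iff.mp h2)).1
    exact hB.2 hA
  have hkey : (goodmanA G).card = ∑ T ∈ P3, (if T ∈ S then 3 else 1) := by
    rw [goodmanA_card_right]
    exact Finset.sum_congr rfl fun T hT => goodman_fiber_card G hT
  have hfil : P3.filter (fun T => T ∈ S) = S := by
    rw [Finset.filter_mem_eq_inter, Finset.inter_eq_right.mpr hS_sub]
  have hsplit := Finset.card_filter_add_card_filter_not
    (s := P3) (p := fun T => T ∈ S)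
  rw [hfil] at hsplit
  have hP3card : P3.card = (Fintype.card V).choose 3 := by
    rw [hP3, card_powersetCard, card_univ]
  have hScard : S.card = (G.cliqueFinset 3).card + (Gᶜ.cliqueFinset 3).card :=
    Finset.card_union_of_disjoint hdisj
  have hsum : ∑ T ∈ P3, (if T ∈ S then 3 else 1) =
      3 * S.card + (P3.filter (fun T => ¬ T ∈ S)).card := by
    rw [Finset.sum_ite, Finset.sum_const, Finset.sum_const, smul_eq_mul, smul_eq_mul,
      mul_one, hfil]
    ring
  have hleft := goodmanA_card_left G
  omega

end GoodmanAux

/-- **Goodman's theorem.** For every graph `G` on `n` vertices, the number of triangles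
plus the number of independent sets of size 3 equals
`(1/2) * (-C(n,3) + ∑_v (C(deg v, 2) + C(n - 1 - deg v, 2)))`. -/
theorem goodman {V : Type*} [Fintype V] [DecidableEq V] (G : SimpleGraph V)
    [DecidableRel G.Adj] :
    (((G.cliqueFinset 3).card + (Gᶜ.cliqueFinset 3).card : ℚ)) =
      (1 / 2) * (-((Fintype.card V).choose 3 : ℚ) +
        ∑ v : V, (((G.degree v).choose 2 : ℚ) +
          ((Fintype.card V - 1 - G.degree v).choose 2 : ℚ))) := by
  have hnat := goodman_nat G
  have hdeg : ∀ v : V, Fintype.card V - 1 - G.degree v = Gᶜ.degree v := fun v =>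
    (SimpleGraph.degree_compl G v).symm
  simp only [hdeg]
  have hcast : ((∑ v : V, ((G.degree v).choose 2 + (Gᶜ.degree v).choose 2) : ℕ) : ℚ) =
      ∑ v : V, (((G.degree v).choose 2 : ℚ) + ((Gᶜ.degree v).choose 2 : ℚ)) := by
    push_cast; rfl
  rw [hnat] at hcast
  push_cast at hcast
  linarith [hcast]
end

section
/- For every graph G, Σ over edges {u,v} of G of |N(u)∖(N(v)∪{v})|·|N(v)∖(N(u)∪{u})| equals D_{P4}(G) + 4·D_{C4}(G), where D_{P4}(G) is the number of induced paths on 4 vertices and D_{C4}(G) is the number of induced 4-cycles. -/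
open Finset SimpleGraph

/-! ### Auxiliary: graphs on `Fin 4` encoded by 6 booleans -/

def B6 (v : Fin 6 → Bool) : Fin 4 → Fin 4 → Bool
  | 0, 1 => v 0 | 1, 0 => v 0
  | 0, 2 => v 1 | 2, 0 => v 1
  | 0, 3 => v 2 | 3, 0 => v 2
  | 1, 2 => v 3 | 2, 1 => v 3
  | 1, 3 => v 4 | 3, 1 => v 4
  | 2, 3 => v 5 | 3, 2 => v 5
  | _, _ => false

def G6 (v : Fin 6 → Bool) : SimpleGraph (Fin 4) where
  Adj i j := B6 v i j = true
  symm := ⟨fun i j => by fin_cases i <;> fin_cases j <;> simp [B6]⟩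
  loopless := ⟨fun i => by fin_cases i <;> simp [B6]⟩

instance (v : Fin 6 → Bool) : DecidableRel (G6 v).Adj := fun i j => by
  unfold G6; infer_instance

def toV (H : SimpleGraph (Fin 4)) [DecidableRel H.Adj] : Fin 6 → Bool
  | 0 => decide (H.Adj 0 1)
  | 1 => decide (H.Adj 0 2)
  | 2 => decide (H.Adj 0 3)
  | 3 => decide (H.Adj 1 2)
  | 4 => decide (H.Adj 1 3)
  | 5 => decide (H.Adj 2 3)

set_option linter.unreachableTactic false in
lemma G6_toV (H : SimpleGraph (Fin 4)) [DecidableRel H.Adj] : G6 (toV H) = H := by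
  ext i j
  show B6 (toV H) i j = true ↔ _
  fin_cases i <;> fin_cases j <;>
    simp [B6, toV] <;>
    first
      | rfl
      | exact H.adj_comm _ _
      | simp [SimpleGraph.irrefl]

/-! ### The quadruple pattern -/

def quadPat {α : Type*} (G : SimpleGraph α) (q : α × α × α × α) : Prop :=
  G.Adj q.1 q.2.1 ∧ G.Adj q.1 q.2.2.1 ∧ G.Adj q.2.1 q.2.2.2 ∧
    ¬G.Adj q.2.1 q.2.2.1 ∧ ¬G.Adj q.1 q.2.2.2 ∧ q.2.2.1 ≠ q.2.1 ∧ q.2.2.2 ≠ q.1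

instance {α : Type*} (G : SimpleGraph α) [DecidableRel G.Adj] [DecidableEq α] :
    DecidablePred (quadPat G) := fun q => by unfold quadPat; infer_instance

/-! ### The core computation on `Fin 4`, by `decide` -/

set_option maxRecDepth 100000 in
set_option maxHeartbeats 4000000 in
lemma core (v : Fin 6 → Bool) :
    ((univ : Finset (Fin 4 × Fin 4 × Fin 4 × Fin 4)).filter
      (fun q => quadPat (G6 v) q ∧
        ({q.1, q.2.1, q.2.2.1, q.2.2.2} : Finset (Fin 4)) = univ)).card =
    2 * (if ∃ e : Equiv.Perm (Fin 4), ∀ i j : Fin 4,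
          (G6 v).Adj (e i) (e j) ↔ ((i : ℕ) + 1 = j ∨ (j : ℕ) + 1 = i) then 1 else 0) +
    8 * (if ∃ e : Equiv.Perm (Fin 4), ∀ i j : Fin 4,
          (G6 v).Adj (e i) (e j) ↔ (i - j = 1 ∨ j - i = 1) then 1 else 0) := by
  revert v; decide

/-! ### Iso with path/cycle graphs restated via permutations -/

lemma iso_path_iff (H : SimpleGraph (Fin 4)) :
    Nonempty (H ≃g pathGraph 4) ↔
      ∃ e : Equiv.Perm (Fin 4), ∀ i j : Fin 4,
        H.Adj (e i) (e j) ↔ ((i : ℕ) + 1 = j ∨ (j : ℕ) + 1 = i) := by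
  constructor
  · rintro ⟨φ⟩
    exact ⟨φ.symm.toEquiv, fun i j => by
      show H.Adj (φ.symm i) (φ.symm j) ↔ _
      rw [show H.Adj (φ.symm i) (φ.symm j) ↔ (pathGraph 4).Adj i j from φ.symm.map_rel_iff,
        pathGraph_adj]⟩
  · rintro ⟨e, h⟩
    exact ⟨⟨e.symm, by
      intro a b
      rw [show (pathGraph 4).Adj (e.symm a) (e.symm b) ↔ _ from pathGraph_adj]
      have := h (e.symm a) (e.symm b)
      simp only [Equiv.apply_symm_apply] at this
      exact this.symm⟩⟩

lemma iso_cycle_iff (H : SimpleGraph (Fin 4)) :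
    Nonempty (H ≃g cycleGraph 4) ↔
      ∃ e : Equiv.Perm (Fin 4), ∀ i j : Fin 4,
        H.Adj (e i) (e j) ↔ (i - j = 1 ∨ j - i = 1) := by
  constructor
  · rintro ⟨φ⟩
    exact ⟨φ.symm.toEquiv, fun i j => by
      show H.Adj (φ.symm i) (φ.symm j) ↔ _
      rw [show H.Adj (φ.symm i) (φ.symm j) ↔ (cycleGraph 4).Adj i j from φ.symm.map_rel_iff,
        show (cycleGraph 4).Adj i j ↔ _ from cycleGraph_adj]⟩
  · rintro ⟨e, h⟩
    exact ⟨⟨e.symm, by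
      intro a b
      rw [show (cycleGraph 4).Adj (e.symm a) (e.symm b) ↔ _ from cycleGraph_adj]
      have := h (e.symm a) (e.symm b)
      simp only [Equiv.apply_symm_apply] at this
      exact this.symm⟩⟩

/-! ### The core lemma restated for an arbitrary decidable graph on Fin 4 -/

set_option maxHeartbeats 2000000 in
open scoped Classical in
lemma core' (H : SimpleGraph (Fin 4)) [DecidableRel H.Adj] :
    ((univ : Finset (Fin 4 × Fin 4 × Fin 4 × Fin 4)).filter
      (fun q => quadPat H q ∧
        ({q.1, q.2.1, q.2.2.1, q.2.2.2} : Finset (Fin 4)) = univ)).card =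
    2 * (if Nonempty (H ≃g pathGraph 4) then 1 else 0) +
    8 * (if Nonempty (H ≃g cycleGraph 4) then 1 else 0) := by
  classical
  obtain ⟨v, rfl⟩ : ∃ v, G6 v = H := ⟨toV H, G6_toV H⟩
  have h := core v
  rw [Finset.filter_congr_decidable] at h ⊢
  rw [h]
  have hp := iso_path_iff (G6 v)
  have hc := iso_cycle_iff (G6 v)
  by_cases h1 : ∃ e : Equiv.Perm (Fin 4), ∀ i j : Fin 4,
      (G6 v).Adj (e i) (e j) ↔ ((i : ℕ) + 1 = j ∨ (j : ℕ) + 1 = i)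
  · rw [if_pos h1, if_pos (hp.mpr h1)]
    by_cases h2 : ∃ e : Equiv.Perm (Fin 4), ∀ i j : Fin 4,
        (G6 v).Adj (e i) (e j) ↔ (i - j = 1 ∨ j - i = 1)
    · rw [if_pos h2, if_pos (hc.mpr h2)]
    · rw [if_neg h2, if_neg (fun hn => h2 (hc.mp hn))]
  · rw [if_neg h1, if_neg (fun hn => h1 (hp.mp hn))]
    by_cases h2 : ∃ e : Equiv.Perm (Fin 4), ∀ i j : Fin 4,
        (G6 v).Adj (e i) (e j) ↔ (i - j = 1 ∨ j - i = 1)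
    · rw [if_pos h2, if_pos (hc.mpr h2)]
    · rw [if_neg h2, if_neg (fun hn => h2 (hc.mp hn))]

/-! ### Distinctness from the pattern -/

lemma quadPat_card {V : Type*} [DecidableEq V] {G : SimpleGraph V}
    {q : V × V × V × V} (hq : quadPat G q) :
    ({q.1, q.2.1, q.2.2.1, q.2.2.2} : Finset V).card = 4 := by
  obtain ⟨h1, h2, h3, h4, h5, h6, h7⟩ := hq
  have huv : q.1 ≠ q.2.1 := h1.ne
  have hux : q.1 ≠ q.2.2.1 := h2.ne
  have hvy : q.2.1 ≠ q.2.2.2 := h3.ne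
  have hxy : q.2.2.1 ≠ q.2.2.2 := fun h => h5 (h ▸ h2)
  rw [card_insert_of_notMem (by
      simp only [mem_insert, mem_singleton]
      push_neg
      exact ⟨huv, hux, fun h => h7 h.symm⟩),
    card_insert_of_notMem (by
      simp only [mem_insert, mem_singleton]
      push_neg
      exact ⟨fun h => h6 h.symm, hvy⟩),
    card_insert_of_notMem (by simpa using hxy), card_singleton]

/-! ### Fiber over a 4-set -/

open scoped Classical in
lemma fiber_card {V : Type*} [Fintype V] [DecidableEq V] (G : SimpleGraph V)
    [DecidableRel G.Adj] (s : Finset V) (h4 : s.card = 4) :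
    ((univ : Finset (V × V × V × V)).filter
      (fun q => quadPat G q ∧ ({q.1, q.2.1, q.2.2.1, q.2.2.2} : Finset V) = s)).card =
    2 * (if Nonempty (G.induce (↑s : Set V) ≃g pathGraph 4) then 1 else 0) +
    8 * (if Nonempty (G.induce (↑s : Set V) ≃g cycleGraph 4) then 1 else 0) := by
  classical
  let e : ↥s ≃ Fin 4 := s.equivFinOfCardEq h4
  let φ : Fin 4 → V := fun i => ((e.symm i : ↥s) : V)
  let H : SimpleGraph (Fin 4) := G.comap φ
  haveI : DecidableRel H.Adj := Classical.decRel _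
  have hφ : Function.Injective φ := fun a b h =>
    e.symm.injective (Subtype.coe_injective h)
  have hφe : ∀ (x : V) (hx : x ∈ s), φ (e ⟨x, hx⟩) = x := fun x hx => by
    simp [φ, e]
  have huniv : (univ : Finset (Fin 4)).image φ = s := by
    ext x
    simp only [mem_image, mem_univ, true_and]
    constructor
    · rintro ⟨i, rfl⟩; exact (e.symm i).2
    · intro hx; exact ⟨e ⟨x, hx⟩, hφe x hx⟩
  have hadj : ∀ a b : Fin 4, H.Adj a b ↔ G.Adj (φ a) (φ b) := fun a b => Iff.rfl
  -- the two filters have the same cardinality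
  have hcard :
      ((univ : Finset (V × V × V × V)).filter
        (fun q => quadPat G q ∧ ({q.1, q.2.1, q.2.2.1, q.2.2.2} : Finset V) = s)).card =
      (((univ : Finset (Fin 4 × Fin 4 × Fin 4 × Fin 4))).filter
        (fun q => quadPat H q ∧
          ({q.1, q.2.1, q.2.2.1, q.2.2.2} : Finset (Fin 4)) = univ)).card := by
    have key : ∀ q : V × V × V × V,
        q ∈ (univ : Finset (V × V × V × V)).filter
          (fun q => quadPat G q ∧ ({q.1, q.2.1, q.2.2.1, q.2.2.2} : Finset V) = s) →
        q.1 ∈ s ∧ q.2.1 ∈ s ∧ q.2.2.1 ∈ s ∧ q.2.2.2 ∈ s := by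
      intro q hq
      have h2 := (mem_filter.mp hq).2.2
      refine ⟨?_, ?_, ?_, ?_⟩ <;> rw [← h2] <;> simp
    refine Finset.card_bij'
      (i := fun q hq => (e ⟨q.1, (key q hq).1⟩, e ⟨q.2.1, (key q hq).2.1⟩,
        e ⟨q.2.2.1, (key q hq).2.2.1⟩, e ⟨q.2.2.2, (key q hq).2.2.2⟩))
      (j := fun q _ => (φ q.1, φ q.2.1, φ q.2.2.1, φ q.2.2.2)) ?_ ?_ ?_ ?_
    · -- maps into the Fin 4 filter
      intro q hq
      obtain ⟨-, hpat, hset⟩ := mem_filter.mp hq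
      obtain ⟨p1, p2, p3, p4, p5, p6, p7⟩ := hpat
      rw [mem_filter]
      refine ⟨mem_univ _, ⟨?_, ?_, ?_, ?_, ?_, ?_, ?_⟩, ?_⟩
      · rw [hadj, hφe, hφe]; exact p1
      · rw [hadj, hφe, hφe]; exact p2
      · rw [hadj, hφe, hφe]; exact p3
      · rw [hadj, hφe, hφe]; exact p4
      · rw [hadj, hφe, hφe]; exact p5
      · intro h
        exact p6 (by
          simpa [hφe] using congrArg Subtype.val (congrArg e.symm h))
      · intro h
        exact p7 (by
          simpa [hφe] using congrArg Subtype.val (congrArg e.symm h))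
      · -- the image four-set is univ
        apply Finset.eq_univ_of_card
        have himg : ({e ⟨q.1, (key q hq).1⟩, e ⟨q.2.1, (key q hq).2.1⟩,
            e ⟨q.2.2.1, (key q hq).2.2.1⟩, e ⟨q.2.2.2, (key q hq).2.2.2⟩} :
              Finset (Fin 4)).image φ = ({q.1, q.2.1, q.2.2.1, q.2.2.2} : Finset V) := by
          simp only [Finset.image_insert, Finset.image_singleton, hφe]
        have := Finset.card_image_of_injective
          ({e ⟨q.1, (key q hq).1⟩, e ⟨q.2.1, (key q hq).2.1⟩,
            e ⟨q.2.2.1, (key q hq).2.2.1⟩, e ⟨q.2.2.2, (key q hq).2.2.2⟩} :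
              Finset (Fin 4)) hφ
        rw [himg, hset] at this
        simp [← this, h4]
    · -- maps back into the V filter
      intro q hq
      obtain ⟨-, hpat, hset⟩ := mem_filter.mp hq
      obtain ⟨p1, p2, p3, p4, p5, p6, p7⟩ := hpat
      rw [mem_filter]
      refine ⟨mem_univ _, ⟨p1, p2, p3, p4, p5, fun h => p6 (hφ h), fun h => p7 (hφ h)⟩, ?_⟩
      · have : ({φ q.1, φ q.2.1, φ q.2.2.1, φ q.2.2.2} : Finset V) =
            ({q.1, q.2.1, q.2.2.1, q.2.2.2} : Finset (Fin 4)).image φ := by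
          simp only [Finset.image_insert, Finset.image_singleton]
        rw [this, hset, huniv]
    · -- left inverse
      intro q hq
      simp only [hφe]
    · -- right inverse
      intro q hq
      have comp : ∀ (a : Fin 4) (h : φ a ∈ s), e ⟨φ a, h⟩ = a := fun a h => by
        simp [φ, e]
      simp only [comp]
  rw [hcard, core' H]
  -- translate the isomorphism conditions
  have isoHs : H ≃g G.induce (↑s : Set V) := Iso.comap e.symm (G.induce (↑s : Set V))
  have hIso : ∀ K : SimpleGraph (Fin 4),
      Nonempty (H ≃g K) ↔ Nonempty (G.induce (↑s : Set V) ≃g K) :=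
    fun K => ⟨fun ⟨ψ⟩ => ⟨isoHs.symm.trans ψ⟩, fun ⟨ψ⟩ => ⟨isoHs.trans ψ⟩⟩
  by_cases h1 : Nonempty (H ≃g pathGraph 4)
  · rw [if_pos h1, if_pos ((hIso _).mp h1)]
    by_cases h2 : Nonempty (H ≃g cycleGraph 4)
    · rw [if_pos h2, if_pos ((hIso _).mp h2)]
    · rw [if_neg h2, if_neg (fun hn => h2 ((hIso _).mpr hn))]
  · rw [if_neg h1, if_neg (fun hn => h1 ((hIso _).mpr hn))]
    by_cases h2 : Nonempty (H ≃g cycleGraph 4)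
    · rw [if_pos h2, if_pos ((hIso _).mp h2)]
    · rw [if_neg h2, if_neg (fun hn => h2 ((hIso _).mpr hn))]


open scoped Classical in
/-- The number of induced copies of a 4-vertex graph `H` in `G`. -/
noncomputable def inducedCount4 {V : Type*} [Fintype V] [DecidableEq V]
    (G : SimpleGraph V) (H : SimpleGraph (Fin 4)) : ℕ :=
  ((Finset.univ.powersetCard 4).filter
    (fun s : Finset V => Nonempty (G.induce (↑s : Set V) ≃g H))).card

/-- For every graph `G`, the sum over edges `{u,v}` of
`|N(u) \ (N(v) ∪ {v})| · |N(v) \ (N(u) ∪ {u})|` equals `D_{P₄}(G) + 4·D_{C₄}(G)`. -/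
theorem stmt5 {V : Type*} [Fintype V] [DecidableEq V] (G : SimpleGraph V)
    [DecidableRel G.Adj] :
    ∑ e ∈ G.edgeFinset,
        Sym2.lift ⟨fun u v =>
            (G.neighborFinset u \ (G.neighborFinset v ∪ {v})).card *
            (G.neighborFinset v \ (G.neighborFinset u ∪ {u})).card,
          fun u v => by simp [Nat.mul_comm]⟩ e =
      inducedCount4 G (SimpleGraph.pathGraph 4) +
        4 * inducedCount4 G (SimpleGraph.cycleGraph 4) := by
  classical
  apply Nat.eq_of_mul_eq_mul_left (show 0 < 2 by norm_num)
  set L : V × V → ℕ := fun p =>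
    (G.neighborFinset p.1 \ (G.neighborFinset p.2 ∪ {p.2})).card *
    (G.neighborFinset p.2 \ (G.neighborFinset p.1 ∪ {p.1})).card with hL
  set pairs : Finset (V × V) := univ.filter (fun p : V × V => G.Adj p.1 p.2) with hpairs
  -- Step A : twice the edge sum is the sum over ordered adjacent pairs
  have stepA : 2 * (∑ e ∈ G.edgeFinset,
      Sym2.lift ⟨fun u v =>
            (G.neighborFinset u \ (G.neighborFinset v ∪ {v})).card *
            (G.neighborFinset v \ (G.neighborFinset u ∪ {u})).card,
          fun u v => by simp [Nat.mul_comm]⟩ e) = ∑ p ∈ pairs, L p := by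
    have hmaps : ∀ p ∈ pairs, s(p.1, p.2) ∈ G.edgeFinset := by
      intro p hp
      rw [mem_edgeFinset, mem_edgeSet]
      exact (mem_filter.mp hp).2
    rw [← sum_fiberwise_of_maps_to hmaps L, mul_sum]
    refine sum_congr rfl ?_
    intro ed hed
    revert hed
    induction ed using Sym2.inductionOn with
    | hf a b =>
      intro hab
      have hadj : G.Adj a b := by rwa [mem_edgeFinset, mem_edgeSet] at hab
      have hfil : pairs.filter (fun p => s(p.1, p.2) = s(a, b)) = {(a, b), (b, a)} := by
        ext ⟨c, d⟩
        simp only [hpairs, mem_filter, mem_univ, true_and, Sym2.eq_iff, mem_insert,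
          mem_singleton, Prod.mk.injEq]
        constructor
        · rintro ⟨hcd, (⟨rfl, rfl⟩ | ⟨rfl, rfl⟩)⟩
          · left; exact ⟨rfl, rfl⟩
          · right; exact ⟨rfl, rfl⟩
        · rintro (⟨rfl, rfl⟩ | ⟨rfl, rfl⟩)
          · exact ⟨hadj, Or.inl ⟨rfl, rfl⟩⟩
          · exact ⟨hadj.symm, Or.inr ⟨rfl, rfl⟩⟩
      rw [hfil, sum_pair (by
        intro h
        exact hadj.ne (congrArg Prod.fst h))]
      rw [Sym2.lift_mk]
      simp only [hL]
      ring
  -- Step B : the pair sum counts the quadruples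
  have stepB : ∑ p ∈ pairs, L p = (univ.filter (quadPat G)).card := by
    have hbi : (univ.filter (quadPat G)) =
        pairs.biUnion (fun p => {p.1} ×ˢ ({p.2} ×ˢ
          ((G.neighborFinset p.1 \ (G.neighborFinset p.2 ∪ {p.2})) ×ˢ
           (G.neighborFinset p.2 \ (G.neighborFinset p.1 ∪ {p.1}))))) := by
      ext ⟨u, v, x, y⟩
      simp only [hpairs, mem_filter, mem_univ, true_and, mem_biUnion, Finset.mem_product,
        mem_singleton, mem_sdiff, mem_union, mem_neighborFinset, quadPat, not_or]
      constructor
      · rintro ⟨h1, h2, h3, h4, h5, h6, h7⟩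
        exact ⟨(u, v), h1, rfl, rfl, ⟨h2, h4, h6⟩, ⟨h3, h5, h7⟩⟩
      · rintro ⟨p, hp, rfl, rfl, ⟨h2, h4, h6⟩, ⟨h3, h5, h7⟩⟩
        exact ⟨hp, h2, h3, h4, h5, h6, h7⟩
    rw [hbi, card_biUnion]
    · refine sum_congr rfl ?_
      intro p hp
      simp [Finset.card_product, hL]
    · intro p1 h1 p2 h2 hne
      rw [Function.onFun, Finset.disjoint_left]
      rintro ⟨a, b, c, d⟩ ha hb
      simp only [Finset.mem_product, mem_singleton] at ha hb
      exact hne (by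
        rw [Prod.ext_iff]
        exact ⟨ha.1.symm.trans hb.1, ha.2.1.symm.trans hb.2.1⟩)
  -- Step C : fiber over 4-sets
  have stepC : ((univ : Finset (V × V × V × V)).filter (quadPat G)).card =
      ∑ s ∈ (univ : Finset V).powersetCard 4,
        (2 * (if Nonempty (G.induce (↑s : Set V) ≃g pathGraph 4) then 1 else 0) +
         8 * (if Nonempty (G.induce (↑s : Set V) ≃g cycleGraph 4) then 1 else 0)) := by
    rw [Finset.card_eq_sum_card_fiberwise
      (f := fun q : V × V × V × V => ({q.1, q.2.1, q.2.2.1, q.2.2.2} : Finset V))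
      (t := (univ : Finset V).powersetCard 4)
      (by
        intro q hq
        rw [Finset.mem_coe, Finset.mem_powersetCard_univ]
        exact quadPat_card ((mem_filter.mp hq).2))]
    refine sum_congr rfl ?_
    intro s hs
    rw [Finset.filter_filter]
    exact fiber_card G s (Finset.mem_powersetCard_univ.mp hs)
  -- Step D : sum the indicators
  rw [stepA, stepB, stepC]
  rw [Finset.sum_add_distrib, ← Finset.mul_sum, ← Finset.mul_sum]
  rw [Finset.sum_boole, Finset.sum_boole]
  simp only [Nat.cast_id]
  rw [inducedCount4, inducedCount4]
  ring
end

section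
/- Similarly, the number of anti-triangles (independent sets of size 3) in H = f(G) equals 2·(D_0(G) + D_2(G)). -/
open Finset SimpleGraph


/-- The graph `H = f(G)`: two disjoint copies of `G`, with a vertex in one copy joined
to a vertex in the other copy exactly when the corresponding vertices of `G` are
distinct and non-adjacent. -/
def doubleGraph {V : Type*} (G : SimpleGraph V) : SimpleGraph (V ⊕ V) where
  Adj x y :=
    match x, y with
    | Sum.inl i, Sum.inl j => G.Adj i j
    | Sum.inr i, Sum.inr j => G.Adj i j
    | Sum.inl i, Sum.inr j => i ≠ j ∧ ¬ G.Adj i j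
    | Sum.inr i, Sum.inl j => i ≠ j ∧ ¬ G.Adj i j
  symm := by
    constructor
    rintro (i | i) (j | j) h
    · exact h.symm
    · exact ⟨h.1.symm, fun a => h.2 a.symm⟩
    · exact ⟨h.1.symm, fun a => h.2 a.symm⟩
    · exact h.symm
  loopless := by
    constructor
    rintro (i | i) h
    · exact G.irrefl h
    · exact G.irrefl h

instance doubleGraphAdjDecidable {V : Type*} [DecidableEq V] (G : SimpleGraph V)
    [DecidableRel G.Adj] : DecidableRel (doubleGraph G).Adj
  | Sum.inl i, Sum.inl j => inferInstanceAs (Decidable (G.Adj i j))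
  | Sum.inr i, Sum.inr j => inferInstanceAs (Decidable (G.Adj i j))
  | Sum.inl i, Sum.inr j => inferInstanceAs (Decidable (i ≠ j ∧ ¬ G.Adj i j))
  | Sum.inr i, Sum.inl j => inferInstanceAs (Decidable (i ≠ j ∧ ¬ G.Adj i j))

/-- `threeSetCount G i` is `D_i(G)`: the number of 3-element vertex subsets of `G`
inducing exactly `i` edges. -/
def threeSetCount {V : Type*} [Fintype V] [DecidableEq V] (G : SimpleGraph V)
    [DecidableRel G.Adj] (i : ℕ) : ℕ :=
  ((Finset.univ.powersetCard 3).filter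
    (fun s => ((s ×ˢ s).filter fun p => G.Adj p.1 p.2).card = 2 * i)).card

section Aux

set_option linter.unusedSectionVars false
set_option linter.unusedVariables false

variable {V : Type*} [Fintype V] [DecidableEq V] (G : SimpleGraph V) [DecidableRel G.Adj]

lemma pairCount_eq (a b c : V) (hab : a ≠ b) (hac : a ≠ c) (hbc : b ≠ c) :
    ((({a,b,c} : Finset V) ×ˢ {a,b,c}).filter fun p => G.Adj p.1 p.2).card =
      (if G.Adj a b then 2 else 0) + (if G.Adj a c then 2 else 0) + (if G.Adj b c then 2 else 0) := by
  rw [Finset.card_filter, Finset.sum_product]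
  simp only [Finset.sum_insert (by simp [hab, hac] : a ∉ ({b,c} : Finset V)),
    Finset.sum_insert (by simp [hbc] : b ∉ ({c} : Finset V)), Finset.sum_singleton]
  by_cases h1 : G.Adj a b <;> by_cases h2 : G.Adj a c <;> by_cases h3 : G.Adj b c <;>
    simp [h1, h2, h3, G.adj_comm b a, G.adj_comm c a, G.adj_comm c b, G.irrefl]

lemma mem_P0 {s : Finset V} :
    s ∈ ((Finset.univ.powersetCard 3).filter
      (fun s => ((s ×ˢ s).filter fun p => G.Adj p.1 p.2).card = 2 * 0)) ↔
    ∃ a b c : V, a ≠ b ∧ a ≠ c ∧ b ≠ c ∧ s = {a,b,c} ∧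
      ¬ G.Adj a b ∧ ¬ G.Adj a c ∧ ¬ G.Adj b c := by
  rw [Finset.mem_filter, Finset.mem_powersetCard_univ]
  constructor
  · rintro ⟨hcard, hcnt⟩
    obtain ⟨a, b, c, hab, hac, hbc, rfl⟩ := Finset.card_eq_three.mp hcard
    rw [pairCount_eq G a b c hab hac hbc] at hcnt
    refine ⟨a, b, c, hab, hac, hbc, rfl, ?_, ?_, ?_⟩ <;>
      · intro h; simp [h] at hcnt
  · rintro ⟨a, b, c, hab, hac, hbc, rfl, h1, h2, h3⟩
    refine ⟨Finset.card_eq_three.mpr ⟨a, b, c, hab, hac, hbc, rfl⟩, ?_⟩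
    rw [pairCount_eq G a b c hab hac hbc]
    simp [h1, h2, h3]

lemma mem_P2 {s : Finset V} :
    s ∈ ((Finset.univ.powersetCard 3).filter
      (fun s => ((s ×ˢ s).filter fun p => G.Adj p.1 p.2).card = 2 * 2)) ↔
    ∃ a b c : V, a ≠ b ∧ a ≠ c ∧ b ≠ c ∧ s = {a,b,c} ∧
      G.Adj a c ∧ G.Adj b c ∧ ¬ G.Adj a b := by
  rw [Finset.mem_filter, Finset.mem_powersetCard_univ]
  constructor
  · rintro ⟨hcard, hcnt⟩
    obtain ⟨a, b, c, hab, hac, hbc, rfl⟩ := Finset.card_eq_three.mp hcard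
    rw [pairCount_eq G a b c hab hac hbc] at hcnt
    by_cases h1 : G.Adj a b <;> by_cases h2 : G.Adj a c <;> by_cases h3 : G.Adj b c <;>
      simp [h1, h2, h3] at hcnt
    · -- missing bc : apex a
      exact ⟨b, c, a, hbc, fun h => hab h.symm, fun h => hac h.symm,
        by ext x; simp; tauto, h1.symm, h2.symm, h3⟩
    · -- missing ac : apex b
      exact ⟨a, c, b, hac, hab, fun h => hbc h.symm,
        by ext x; simp; tauto, h1, h3.symm, h2⟩
    · -- missing ab : apex c
      exact ⟨a, b, c, hab, hac, hbc, rfl, h2, h3, h1⟩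
  · rintro ⟨a, b, c, hab, hac, hbc, rfl, h1, h2, h3⟩
    refine ⟨Finset.card_eq_three.mpr ⟨a, b, c, hab, hac, hbc, rfl⟩, ?_⟩
    rw [pairCount_eq G a b c hab hac hbc]
    simp [h1, h2, h3]

lemma adj_ll (i j : V) :
    (doubleGraph G)ᶜ.Adj (Sum.inl i) (Sum.inl j) ↔ i ≠ j ∧ ¬ G.Adj i j := by
  simp [SimpleGraph.compl_adj, doubleGraph]

lemma adj_rr (i j : V) :
    (doubleGraph G)ᶜ.Adj (Sum.inr i) (Sum.inr j) ↔ i ≠ j ∧ ¬ G.Adj i j := by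
  simp [SimpleGraph.compl_adj, doubleGraph]

lemma adj_lr (i j : V) :
    (doubleGraph G)ᶜ.Adj (Sum.inl i) (Sum.inr j) ↔ (i = j ∨ G.Adj i j) := by
  simp [SimpleGraph.compl_adj, doubleGraph]
  tauto

lemma adj_rl (i j : V) :
    (doubleGraph G)ᶜ.Adj (Sum.inr i) (Sum.inl j) ↔ (i = j ∨ G.Adj i j) := by
  simp [SimpleGraph.compl_adj, doubleGraph]
  tauto

lemma apex_helper {u v w : V} (huv : u ≠ v) (hA : ¬ G.Adj u v)
    (h1 : u = w ∨ G.Adj u w) (h2 : v = w ∨ G.Adj v w) :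
    G.Adj u w ∧ G.Adj v w := by
  constructor
  · rcases h1 with rfl | h
    · rcases h2 with rfl | h
      · exact absurd rfl huv
      · exact absurd h.symm hA
    · exact h
  · rcases h2 with rfl | h
    · rcases h1 with rfl | h
      · exact absurd rfl huv
      · exact absurd h hA
    · exact h

lemma clique_structure (t : Finset (V ⊕ V)) (ht : t ∈ (doubleGraph G)ᶜ.cliqueFinset 3) :
    (∃ a b c : V, a ≠ b ∧ a ≠ c ∧ b ≠ c ∧ ¬G.Adj a b ∧ ¬G.Adj a c ∧ ¬G.Adj b c ∧
       (t = {Sum.inl a, Sum.inl b, Sum.inl c} ∨ t = {Sum.inr a, Sum.inr b, Sum.inr c})) ∨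
    (∃ a b c : V, a ≠ b ∧ a ≠ c ∧ b ≠ c ∧ G.Adj a c ∧ G.Adj b c ∧ ¬G.Adj a b ∧
       (t = {Sum.inl a, Sum.inl b, Sum.inr c} ∨ t = {Sum.inr a, Sum.inr b, Sum.inl c})) := by
  rw [SimpleGraph.mem_cliqueFinset_iff, SimpleGraph.is3Clique_iff] at ht
  obtain ⟨x, y, z, hxy, hxz, hyz, rfl⟩ := ht
  rcases x with a | a <;> rcases y with b | b <;> rcases z with c | c
  · rw [adj_ll] at hxy hxz hyz
    exact Or.inl ⟨a, b, c, hxy.1, hxz.1, hyz.1, hxy.2, hxz.2, hyz.2, Or.inl rfl⟩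
  · -- a L, b L, c R : apex c
    rw [adj_ll] at hxy; rw [adj_lr] at hxz hyz
    obtain ⟨h1, h2⟩ := apex_helper G hxy.1 hxy.2 hxz hyz
    exact Or.inr ⟨a, b, c, hxy.1, G.ne_of_adj h1, G.ne_of_adj h2, h1, h2, hxy.2, Or.inl rfl⟩
  · -- a L, b R, c L : apex b
    rw [adj_ll] at hxz; rw [adj_lr] at hxy; rw [adj_rl] at hyz
    obtain ⟨h1, h2⟩ := apex_helper G hxz.1 hxz.2 hxy (hyz.imp Eq.symm fun h => h.symm)
    exact Or.inr ⟨a, c, b, hxz.1, G.ne_of_adj h1, G.ne_of_adj h2, h1, h2, hxz.2,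
      Or.inl (by ext x; simp; tauto)⟩
  · -- a L, b R, c R : apex a
    rw [adj_rr] at hyz; rw [adj_lr] at hxy hxz
    obtain ⟨h1, h2⟩ := apex_helper G hyz.1 hyz.2 (hxy.imp Eq.symm fun h => h.symm)
      (hxz.imp Eq.symm fun h => h.symm)
    exact Or.inr ⟨b, c, a, hyz.1, G.ne_of_adj h1, G.ne_of_adj h2, h1, h2, hyz.2,
      Or.inr (by ext x; simp; tauto)⟩
  · -- a R, b L, c L : apex a
    rw [adj_ll] at hyz; rw [adj_rl] at hxy hxz
    obtain ⟨h1, h2⟩ := apex_helper G hyz.1 hyz.2 (hxy.imp Eq.symm fun h => h.symm)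
      (hxz.imp Eq.symm fun h => h.symm)
    exact Or.inr ⟨b, c, a, hyz.1, G.ne_of_adj h1, G.ne_of_adj h2, h1, h2, hyz.2,
      Or.inl (by ext x; simp; tauto)⟩
  · -- a R, b L, c R : apex b
    rw [adj_rr] at hxz; rw [adj_rl] at hxy; rw [adj_lr] at hyz
    obtain ⟨h1, h2⟩ := apex_helper G hxz.1 hxz.2 hxy (hyz.imp Eq.symm fun h => h.symm)
    exact Or.inr ⟨a, c, b, hxz.1, G.ne_of_adj h1, G.ne_of_adj h2, h1, h2, hxz.2,
      Or.inr (by ext x; simp; tauto)⟩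
  · -- a R, b R, c L : apex c
    rw [adj_rr] at hxy; rw [adj_rl] at hxz hyz
    obtain ⟨h1, h2⟩ := apex_helper G hxy.1 hxy.2 hxz hyz
    exact Or.inr ⟨a, b, c, hxy.1, G.ne_of_adj h1, G.ne_of_adj h2, h1, h2, hxy.2, Or.inr rfl⟩
  · rw [adj_rr] at hxy hxz hyz
    exact Or.inl ⟨a, b, c, hxy.1, hxz.1, hyz.1, hxy.2, hxz.2, hyz.2, Or.inr rfl⟩

def fmap : Finset (V ⊕ V) → Bool × Finset V := fun t =>
  (decide (2 ≤ (t.filter (fun x => x.isLeft = true)).card), t.image (Sum.elim id id))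

def invmap : Bool × Finset V → Finset (V ⊕ V) := fun p =>
  p.2.image (fun v => if (p.2.filter (fun w => G.Adj v w)).card = 2 then
    (if p.1 then Sum.inr v else Sum.inl v) else (if p.1 then Sum.inl v else Sum.inr v))

lemma fmap_lll (a b c : V) (hab : a ≠ b) (hac : a ≠ c) (hbc : b ≠ c) :
    fmap ({Sum.inl a, Sum.inl b, Sum.inl c} : Finset (V ⊕ V)) = (true, ({a,b,c} : Finset V)) := by
  unfold fmap
  congr 1
  · rw [decide_eq_true_eq]
    rw [Finset.filter_insert, Finset.filter_insert, Finset.filter_singleton]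
    simp [Finset.card_insert_of_notMem, hab, hac, hbc]
  · simp [Finset.image_insert]

lemma fmap_rrr (a b c : V) :
    fmap ({Sum.inr a, Sum.inr b, Sum.inr c} : Finset (V ⊕ V)) = (false, ({a,b,c} : Finset V)) := by
  unfold fmap
  congr 1
  · simp [Finset.filter_insert, Finset.filter_singleton]
  · simp [Finset.image_insert]

lemma fmap_llr (a b c : V) (hab : a ≠ b) :
    fmap ({Sum.inl a, Sum.inl b, Sum.inr c} : Finset (V ⊕ V)) = (true, ({a,b,c} : Finset V)) := by
  unfold fmap
  congr 1
  · rw [decide_eq_true_eq]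
    rw [Finset.filter_insert, Finset.filter_insert, Finset.filter_singleton]
    simp [Finset.card_insert_of_notMem, hab]
  · simp [Finset.image_insert]

lemma fmap_rrl (a b c : V) :
    fmap ({Sum.inr a, Sum.inr b, Sum.inl c} : Finset (V ⊕ V)) = (false, ({a,b,c} : Finset V)) := by
  unfold fmap
  congr 1
  · rw [decide_eq_false_iff_not]
    rw [Finset.filter_insert, Finset.filter_insert, Finset.filter_singleton]
    simp
  · simp [Finset.image_insert]

lemma invmap_P0 (bb : Bool) (a b c : V) (hab : a ≠ b) (hac : a ≠ c) (hbc : b ≠ c)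
    (h1 : ¬ G.Adj a b) (h2 : ¬ G.Adj a c) (h3 : ¬ G.Adj b c) :
    invmap G (bb, ({a,b,c} : Finset V)) =
      if bb then ({Sum.inl a, Sum.inl b, Sum.inl c} : Finset (V ⊕ V))
      else {Sum.inr a, Sum.inr b, Sum.inr c} := by
  have h1' : ¬ G.Adj b a := fun h => h1 h.symm
  have h2' : ¬ G.Adj c a := fun h => h2 h.symm
  have h3' : ¬ G.Adj c b := fun h => h3 h.symm
  have ha : (({a,b,c} : Finset V).filter (fun w => G.Adj a w)).card = 0 := by
    rw [Finset.filter_insert, Finset.filter_insert, Finset.filter_singleton]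
    simp [G.irrefl, h1, h2]
  have hb : (({a,b,c} : Finset V).filter (fun w => G.Adj b w)).card = 0 := by
    rw [Finset.filter_insert, Finset.filter_insert, Finset.filter_singleton]
    simp [G.irrefl, h1', h3]
  have hc : (({a,b,c} : Finset V).filter (fun w => G.Adj c w)).card = 0 := by
    rw [Finset.filter_insert, Finset.filter_insert, Finset.filter_singleton]
    simp [G.irrefl, h2', h3']
  unfold invmap
  simp only [Finset.image_insert, Finset.image_singleton, ha, hb, hc]
  norm_num
  cases bb <;> simp

lemma invmap_P2 (bb : Bool) (a b c : V) (hab : a ≠ b) (hac : a ≠ c) (hbc : b ≠ c)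
    (h1 : G.Adj a c) (h2 : G.Adj b c) (h3 : ¬ G.Adj a b) :
    invmap G (bb, ({a,b,c} : Finset V)) =
      if bb then ({Sum.inl a, Sum.inl b, Sum.inr c} : Finset (V ⊕ V))
      else {Sum.inr a, Sum.inr b, Sum.inl c} := by
  have h3' : ¬ G.Adj b a := fun h => h3 h.symm
  have ha : (({a,b,c} : Finset V).filter (fun w => G.Adj a w)).card = 1 := by
    rw [Finset.filter_insert, Finset.filter_insert, Finset.filter_singleton]
    simp [G.irrefl, h1, h3]
  have hb : (({a,b,c} : Finset V).filter (fun w => G.Adj b w)).card = 1 := by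
    rw [Finset.filter_insert, Finset.filter_insert, Finset.filter_singleton]
    simp [G.irrefl, h2, h3']
  have hc : (({a,b,c} : Finset V).filter (fun w => G.Adj c w)).card = 2 := by
    rw [Finset.filter_insert, Finset.filter_insert, Finset.filter_singleton]
    simp [G.irrefl, h1.symm, h2.symm, Finset.card_insert_of_notMem, hab]
  unfold invmap
  simp only [Finset.image_insert, Finset.image_singleton, ha, hb, hc]
  norm_num
  cases bb <;> simp

end Aux

/-- The number of anti-triangles (independent sets of size 3) of `H = f(G)` equals
`2·(D₀(G) + D₂(G))`. -/
theorem stmt12 {V : Type*} [Fintype V] [DecidableEq V] (G : SimpleGraph V)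
    [DecidableRel G.Adj] :
    ((doubleGraph G)ᶜ.cliqueFinset 3).card =
      2 * (threeSetCount G 0 + threeSetCount G 2) := by
  classical
  set P0 := ((Finset.univ.powersetCard 3).filter
      (fun s : Finset V => ((s ×ˢ s).filter fun p => G.Adj p.1 p.2).card = 2 * 0)) with hP0def
  set P2 := ((Finset.univ.powersetCard 3).filter
      (fun s : Finset V => ((s ×ˢ s).filter fun p => G.Adj p.1 p.2).card = 2 * 2)) with hP2def
  have hdisj : Disjoint P0 P2 := by
    rw [Finset.disjoint_left]
    intro s h0 h2
    rw [hP0def, Finset.mem_filter] at h0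
    rw [hP2def, Finset.mem_filter] at h2
    omega
  have key : ((doubleGraph G)ᶜ.cliqueFinset 3).card =
      (({false, true} : Finset Bool) ×ˢ (P0 ∪ P2)).card := by
    refine Finset.card_nbij' fmap (invmap G) ?_ ?_ ?_ ?_
    · intro t ht
      rw [Finset.mem_coe, Finset.mem_product]
      rcases clique_structure G t ht with
          ⟨a, b, c, hab, hac, hbc, e1, e2, e3, rfl | rfl⟩ |
          ⟨a, b, c, hab, hac, hbc, e1, e2, e3, rfl | rfl⟩
      · rw [fmap_lll a b c hab hac hbc]
        exact ⟨by simp, Finset.mem_union_left _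
          ((mem_P0 G).mpr ⟨a, b, c, hab, hac, hbc, rfl, e1, e2, e3⟩)⟩
      · rw [fmap_rrr a b c]
        exact ⟨by simp, Finset.mem_union_left _
          ((mem_P0 G).mpr ⟨a, b, c, hab, hac, hbc, rfl, e1, e2, e3⟩)⟩
      · rw [fmap_llr a b c hab]
        exact ⟨by simp, Finset.mem_union_right _
          ((mem_P2 G).mpr ⟨a, b, c, hab, hac, hbc, rfl, e1, e2, e3⟩)⟩
      · rw [fmap_rrl a b c]
        exact ⟨by simp, Finset.mem_union_right _
          ((mem_P2 G).mpr ⟨a, b, c, hab, hac, hbc, rfl, e1, e2, e3⟩)⟩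
    · rintro ⟨bb, s⟩ hp
      rw [Finset.mem_coe, Finset.mem_product, Finset.mem_union] at hp
      rw [Finset.mem_coe, SimpleGraph.mem_cliqueFinset_iff, SimpleGraph.is3Clique_iff]
      rcases hp.2 with h | h
      · obtain ⟨a, b, c, hab, hac, hbc, rfl, e1, e2, e3⟩ := (mem_P0 G).mp h
        rw [invmap_P0 G bb a b c hab hac hbc e1 e2 e3]
        cases bb
        · simp only [if_neg Bool.false_ne_true, Bool.false_eq_true, if_false]
          exact ⟨Sum.inr a, Sum.inr b, Sum.inr c, (adj_rr G a b).mpr ⟨hab, e1⟩,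
            (adj_rr G a c).mpr ⟨hac, e2⟩, (adj_rr G b c).mpr ⟨hbc, e3⟩, rfl⟩
        · simp only [if_true]
          exact ⟨Sum.inl a, Sum.inl b, Sum.inl c, (adj_ll G a b).mpr ⟨hab, e1⟩,
            (adj_ll G a c).mpr ⟨hac, e2⟩, (adj_ll G b c).mpr ⟨hbc, e3⟩, rfl⟩
      · obtain ⟨a, b, c, hab, hac, hbc, rfl, e1, e2, e3⟩ := (mem_P2 G).mp h
        rw [invmap_P2 G bb a b c hab hac hbc e1 e2 e3]
        cases bb
        · simp only [Bool.false_eq_true, if_false]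
          exact ⟨Sum.inr a, Sum.inr b, Sum.inl c, (adj_rr G a b).mpr ⟨hab, e3⟩,
            (adj_rl G a c).mpr (Or.inr e1), (adj_rl G b c).mpr (Or.inr e2), rfl⟩
        · simp only [if_true]
          exact ⟨Sum.inl a, Sum.inl b, Sum.inr c, (adj_ll G a b).mpr ⟨hab, e3⟩,
            (adj_lr G a c).mpr (Or.inr e1), (adj_lr G b c).mpr (Or.inr e2), rfl⟩
    · intro t ht
      rcases clique_structure G t ht with
          ⟨a, b, c, hab, hac, hbc, e1, e2, e3, rfl | rfl⟩ |
          ⟨a, b, c, hab, hac, hbc, e1, e2, e3, rfl | rfl⟩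
      · rw [fmap_lll a b c hab hac hbc, invmap_P0 G true a b c hab hac hbc e1 e2 e3]; simp
      · rw [fmap_rrr a b c, invmap_P0 G false a b c hab hac hbc e1 e2 e3]; simp
      · rw [fmap_llr a b c hab, invmap_P2 G true a b c hab hac hbc e1 e2 e3]; simp
      · rw [fmap_rrl a b c, invmap_P2 G false a b c hab hac hbc e1 e2 e3]; simp
    · rintro ⟨bb, s⟩ hp
      rw [Finset.mem_coe, Finset.mem_product, Finset.mem_union] at hp
      rcases hp.2 with h | h
      · obtain ⟨a, b, c, hab, hac, hbc, rfl, e1, e2, e3⟩ := (mem_P0 G).mp h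
        rw [invmap_P0 G bb a b c hab hac hbc e1 e2 e3]
        cases bb
        · simp only [Bool.false_eq_true, if_false]
          rw [fmap_rrr a b c]
        · simp only [if_true]
          rw [fmap_lll a b c hab hac hbc]
      · obtain ⟨a, b, c, hab, hac, hbc, rfl, e1, e2, e3⟩ := (mem_P2 G).mp h
        rw [invmap_P2 G bb a b c hab hac hbc e1 e2 e3]
        cases bb
        · simp only [Bool.false_eq_true, if_false]
          rw [fmap_rrl a b c]
        · simp only [if_true]
          rw [fmap_llr a b c hab]
  rw [key, Finset.card_product, Finset.card_union_of_disjoint hdisj]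
  have h2 : ({false, true} : Finset Bool).card = 2 := rfl
  rw [h2]
  rfl
end

section
/- If a graph H contains no induced path on 4 vertices (no induced P4), then for every subset W of V(H) with |W| ≥ 2, either the induced subgraph H[W] is disconnected or its complement (the complement of H restricted to W) is disconnected. -/
open SimpleGraph

section Aux

variable {α : Type*}

/-- pattern of an induced P4: a-b-c-d -/
def P4pat (G : SimpleGraph α) (a b c d : α) : Prop :=
  G.Adj a b ∧ G.Adj b c ∧ G.Adj c d ∧ ¬G.Adj a c ∧ ¬G.Adj b d ∧ ¬G.Adj a d ∧
    a ≠ c ∧ b ≠ d ∧ a ≠ d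

lemma exists_nonadj [Fintype α] (G : SimpleGraph α) (hc : Gᶜ.Connected)
    (h2 : 2 ≤ Fintype.card α) (v : α) : ∃ w, w ≠ v ∧ ¬G.Adj v w := by
  obtain ⟨u, hu⟩ := Fintype.exists_ne_of_one_lt_card (by omega) v
  obtain ⟨p⟩ := hc.preconnected v u
  have hnil : ¬p.Nil := SimpleGraph.Walk.not_nil_of_ne (Ne.symm hu)
  have hadj : Gᶜ.Adj v (p.getVert 1) := p.adj_snd hnil
  rw [compl_adj] at hadj
  exact ⟨p.getVert 1, Ne.symm hadj.1, hadj.2⟩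

lemma bridge (G : SimpleGraph α) {u v : α} (p : G.Walk u v) :
    ∀ (hu : u ≠ v), ∃ x : {y : α // y ≠ v},
      (G.induce {y | y ≠ v}).Reachable ⟨u, hu⟩ x ∧ G.Adj ↑x v := by
  induction p with
  | nil => exact fun hu => absurd rfl hu
  | @cons a m b h q ih =>
    intro hu
    by_cases hm : m = b
    · subst hm; exact ⟨⟨a, hu⟩, Reachable.refl _, h⟩
    · obtain ⟨x, hx1, hx2⟩ := ih hm
      have hadj : (G.induce {y | y ≠ b}).Adj ⟨a, hu⟩ ⟨m, hm⟩ := h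
      exact ⟨x, hadj.reachable.trans hx1, hx2⟩

lemma switch_edge {β : Type*} (G' : SimpleGraph β) (P : β → Prop) {u x : β}
    (p : G'.Walk u x) (hu : ¬P u) (hx : P x) :
    ∃ a b, G'.Adj a b ∧ ¬P a ∧ P b ∧ G'.Reachable u a := by
  induction p with
  | nil => exact absurd hx hu
  | @cons a m _ h q ih =>
    by_cases hm : P m
    · exact ⟨a, m, h, hu, hm, Reachable.refl _⟩
    · obtain ⟨p', q', h1, h2, h3, h4⟩ := ih hm hx
      exact ⟨p', q', h1, h2, h3, h.reachable.trans h4⟩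

lemma cutvertex (G : SimpleGraph α) (v w : α) (hG : G.Connected)
    (hwv : w ≠ v) (hwn : ¬G.Adj v w)
    (hdisc : ¬(G.induce {y | y ≠ v}).Connected) :
    ∃ a b c d : α, P4pat G a b c d := by
  classical
  set s : Set α := {y | y ≠ v} with hs
  set G' : SimpleGraph s := G.induce s with hG'
  have hne : Nonempty s := ⟨⟨w, hwv⟩⟩
  have hnp : ¬G'.Preconnected := by
    intro h; exact hdisc ⟨h⟩
  rw [Preconnected] at hnp
  push_neg at hnp
  obtain ⟨a0, b0, hab⟩ := hnp
  set w1 : s := ⟨w, hwv⟩ with hw1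
  have hc0 : ∃ c0 : s, ¬G'.Reachable w1 c0 := by
    by_cases h : G'.Reachable w1 a0
    · exact ⟨b0, fun h2 => hab (h.symm.trans h2)⟩
    · exact ⟨a0, h⟩
  obtain ⟨c0, hc0⟩ := hc0
  -- bridge for w1
  obtain ⟨pw⟩ := hG.preconnected w v
  obtain ⟨x, hx1, hx2⟩ := bridge G pw hwv
  obtain ⟨pc⟩ := hG.preconnected ↑c0 v
  obtain ⟨y, hy1, hy2⟩ := bridge G pc c0.2
  -- walk from w1 to x in G'
  obtain ⟨pwx⟩ := hx1
  obtain ⟨p, q, hpq, hp, hq, hreach⟩ :=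
    switch_edge G' (fun z => G.Adj ↑z v) pwx (fun h => hwn h.symm) hx2
  have hwq : G'.Reachable w1 q := hreach.trans hpq.reachable
  have hqy : ¬G'.Reachable q y := fun h => hc0 ((hwq.trans h).trans hy1.symm)
  have hpy : ¬G'.Reachable p y := fun h => hc0 ((hreach.trans h).trans hy1.symm)
  refine ⟨↑p, ↑q, v, ↑y, ?_, hq, hy2.symm, hp, ?_, ?_, p.2, ?_, ?_⟩
  · exact hpq
  · intro h
    exact hqy (SimpleGraph.Adj.reachable (show G'.Adj q y from h))
  · intro h
    exact hpy (SimpleGraph.Adj.reachable (show G'.Adj p y from h))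
  · intro h; exact hqy (Subtype.ext h ▸ Reachable.refl _)
  · intro h; exact hpy (Subtype.ext h ▸ Reachable.refl _)

lemma compl_induce (G : SimpleGraph α) (s : Set α) :
    (G.induce s)ᶜ = Gᶜ.induce s := by
  ext a b
  simp [compl_adj, Subtype.ext_iff]

lemma P4pat_compl (G : SimpleGraph α) {a b c d : α} (h : P4pat Gᶜ a b c d) :
    ∃ a' b' c' d', P4pat G a' b' c' d' := by
  obtain ⟨hab, hbc, hcd, hac, hbd, had, hac', hbd', had'⟩ := h
  rw [compl_adj] at hab hbc hcd
  refine ⟨b, d, a, c, ?_, ?_, ?_, ?_, ?_, ?_, Ne.symm hab.1, ?_, hbc.1⟩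
  · -- Adj b d : from ¬Gᶜ.Adj b d and b ≠ d
    by_contra h
    exact hbd ((compl_adj G b d).2 ⟨hbd', h⟩)
  · by_contra h
    exact had ((compl_adj G a d).2 ⟨had', fun h2 => h h2.symm⟩)
  · by_contra h
    exact hac ((compl_adj G a c).2 ⟨hac', h⟩)
  · intro h; exact hab.2 h.symm
  · intro h; exact hcd.2 h.symm
  · exact hbc.2
  · exact fun h => hcd.1 h.symm

lemma key : ∀ (n : ℕ) {α : Type*} [Fintype α] [DecidableEq α] (G : SimpleGraph α),
    Fintype.card α ≤ n → 2 ≤ Fintype.card α → G.Connected → Gᶜ.Connected →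
    ∃ a b c d : α, P4pat G a b c d := by
  intro n
  induction n with
  | zero => intro α _ _ G h1 h2 _ _; omega
  | succ n ih =>
    intro α _ _ G h1 h2 hG hGc
    classical
    rcases eq_or_lt_of_le h2 with h2' | h3
    · -- card = 2 : contradiction
      exfalso
      have hne : Nonempty α := Fintype.card_pos_iff.mp (by omega)
      obtain ⟨v⟩ := hne
      obtain ⟨w, hwv, hwn⟩ := exists_nonadj G hGc h2 v
      obtain ⟨w', hwv', hwn'⟩ := exists_nonadj Gᶜ (by rwa [compl_compl]) h2 v
      have hadj : G.Adj v w' := by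
        by_contra h
        exact hwn' ((compl_adj G v w').2 ⟨Ne.symm hwv', h⟩)
      have hww : w = w' := by
        by_contra hne'
        have : ({v, w, w'} : Finset α).card ≤ Fintype.card α :=
          Finset.card_le_card (Finset.subset_univ _) |>.trans_eq (Finset.card_univ)
        have h3 : ({v, w, w'} : Finset α).card = 3 := by
          rw [Finset.card_insert_of_notMem (by simp [Ne.symm hwv, Ne.symm hwv']),
            Finset.card_pair hne']
        omega
      exact hwn (hww ▸ hadj)
    · -- card ≥ 3
      have hne : Nonempty α := Fintype.card_pos_iff.mp (by omega)
      obtain ⟨v⟩ := hne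
      set s : Set α := {y | y ≠ v} with hs
      have hcardlt : Fintype.card s < Fintype.card α :=
        Fintype.card_subtype_lt (p := fun y => y ≠ v) (x := v) (by simp)
      have hcard2 : 2 ≤ Fintype.card s := by
        obtain ⟨a, b, c, hab, hac, hbc⟩ := Fintype.two_lt_card_iff.mp h3
        refine Fintype.one_lt_card_iff.mpr ?_
        by_cases ha : a = v
        · subst ha
          exact ⟨⟨b, Ne.symm hab⟩, ⟨c, Ne.symm hac⟩, fun h => hbc (congrArg Subtype.val h)⟩
        · by_cases hb : b = v
          · subst hb
            exact ⟨⟨a, ha⟩, ⟨c, Ne.symm hbc⟩, fun h => hac (congrArg Subtype.val h)⟩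
          · exact ⟨⟨a, ha⟩, ⟨b, hb⟩, fun h => hab (congrArg Subtype.val h)⟩
      by_cases hA : (G.induce s).Connected ∧ ((G.induce s))ᶜ.Connected
      · obtain ⟨a, b, c, d, p1, p2, p3, p4, p5, p6, p7, p8, p9⟩ :=
          ih (G.induce s) (by omega) hcard2 hA.1 hA.2
        refine ⟨↑a, ↑b, ↑c, ↑d, p1, p2, p3, p4, p5, p6, ?_, ?_, ?_⟩
        · exact fun h => p7 (Subtype.ext h)
        · exact fun h => p8 (Subtype.ext h)
        · exact fun h => p9 (Subtype.ext h)
      · rw [not_and_or] at hA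
        rcases hA with hA | hA
        · obtain ⟨w, hwv, hwn⟩ := exists_nonadj G hGc h2 v
          exact cutvertex G v w hG hwv hwn hA
        · rw [compl_induce] at hA
          obtain ⟨w, hwv, hwn⟩ := exists_nonadj Gᶜ (by rwa [compl_compl]) h2 v
          obtain ⟨a, b, c, d, hp⟩ := cutvertex Gᶜ v w hGc hwv hwn hA
          exact P4pat_compl G hp

end Aux

/-- **Seinsche's theorem.** If a graph `H` contains no induced path on 4 vertices,
then for every vertex subset `W` with `|W| ≥ 2`, either the induced subgraph `H[W]`
or its complement is disconnected. -/
theorem stmt16 {V : Type*} [Fintype V] [DecidableEq V] (H : SimpleGraph V)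
    (hfree : ∀ s : Finset V, s.card = 4 →
      IsEmpty (H.induce (↑s : Set V) ≃g SimpleGraph.pathGraph 4)) :
    ∀ W : Finset V, 2 ≤ W.card →
      ¬ (H.induce (↑W : Set V)).Connected ∨ ¬ ((H.induce (↑W : Set V))ᶜ).Connected := by
  intro W hW
  by_contra hcon
  push_neg at hcon
  obtain ⟨h1, h2⟩ := hcon
  have hcard : 2 ≤ Fintype.card (↑W : Set V) := by
    simpa using hW
  obtain ⟨a, b, c, d, hab, hbc, hcd, hac, hbd, had, hac', hbd', had'⟩ :=
    key (Fintype.card (↑W : Set V)) (H.induce (↑W : Set V)) le_rfl hcard h1 h2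
  -- coerce to V
  set a' : V := ↑a; set b' : V := ↑b; set c' : V := ↑c; set d' : V := ↑d
  have Hab : H.Adj a' b' := hab
  have Hbc : H.Adj b' c' := hbc
  have Hcd : H.Adj c' d' := hcd
  have Hac : ¬H.Adj a' c' := hac
  have Hbd : ¬H.Adj b' d' := hbd
  have Had : ¬H.Adj a' d' := had
  have Nab : a' ≠ b' := Hab.ne
  have Nbc : b' ≠ c' := Hbc.ne
  have Ncd : c' ≠ d' := Hcd.ne
  have Nac : a' ≠ c' := fun h => hac' (Subtype.ext h)
  have Nbd : b' ≠ d' := fun h => hbd' (Subtype.ext h)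
  have Nad : a' ≠ d' := fun h => had' (Subtype.ext h)
  have Hca : ¬H.Adj c' a' := fun h => Hac h.symm
  have Hdb : ¬H.Adj d' b' := fun h => Hbd h.symm
  have Hda : ¬H.Adj d' a' := fun h => Had h.symm
  set t : Finset V := {a', b', c', d'} with ht
  have hcard4 : t.card = 4 := by
    rw [ht, Finset.card_insert_of_notMem (by simp [Nab, Nac, Nad]),
      Finset.card_insert_of_notMem (by simp [Nbc, Nbd]),
      Finset.card_pair Ncd]
  refine (hfree t hcard4).false ?_
  have hmem : ∀ i : Fin 4, (![a', b', c', d'] i) ∈ (↑t : Set V) := by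
    intro i; fin_cases i <;> simp [ht]
  let f : Fin 4 → (↑t : Set V) := fun i => ⟨![a', b', c', d'] i, hmem i⟩
  have hinj : Function.Injective f := by
    intro i j hij
    have := congrArg Subtype.val hij
    fin_cases i <;> fin_cases j <;> simp_all [f]
  have hsurj : Function.Surjective f := by
    rintro ⟨x, hx⟩
    have hx' : x ∈ t := hx
    simp only [ht, Finset.mem_insert, Finset.mem_singleton] at hx'
    rcases hx' with h | h | h | h
    · exact ⟨0, Subtype.ext (by simp [f, h])⟩
    · exact ⟨1, Subtype.ext (by simp [f, h])⟩
    · exact ⟨2, Subtype.ext (by simp [f, h])⟩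
    · exact ⟨3, Subtype.ext (by simp [f, h])⟩
  let e : Fin 4 ≃ (↑t : Set V) := Equiv.ofBijective f ⟨hinj, hsurj⟩
  have hmapped : ∀ i j : Fin 4,
      (H.induce (↑t : Set V)).Adj (e i) (e j) ↔ (SimpleGraph.pathGraph 4).Adj i j := by
    intro i j
    show H.Adj (![a', b', c', d'] i) (![a', b', c', d'] j) ↔ _
    fin_cases i <;> fin_cases j <;>
      simp [pathGraph_adj, Hab, Hbc, Hcd, Hac, Hbd, Had, Hca, Hdb, Hda,
        Hab.symm, Hbc.symm, Hcd.symm] <;> decide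
  exact (RelIso.mk e (fun {i j} => hmapped i j)).symm
end
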